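/- Let (A,≺,≻,α) be a Hom-Leibniz dendriform algebra over a field K and let α': A→A be a morphism of (A,≺,≻,α), i.e. a linear map with α'(x≺y) = α'(x)≺α'(y), α'(x≻y) = α'(x)≻α'(y) for all x,y, and α'∘α = α∘α'. Define x ≺_{α'} y = α'(x≺y) and x ≻_{α'} y = α'(x≻y). Then (A, ≺_{α'}, ≻_{α'}, α∘α') is a Hom-Leibniz dendriform algebra. -/
import Mathlib


/-- A Hom-Leibniz dendriform algebra `(A, ≺, ≻, α)`, with `p = ≺` and `s = ≻`
and `[x,y] = x≺y + x≻y`. -/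
def HomLeibnizDendriform {K A : Type*} [Field K] [AddCommGroup A] [Module K A]
    (p s : A →ₗ[K] A →ₗ[K] A) (α : A →ₗ[K] A) : Prop :=
  (∀ x y z : A, s (p x y + s x y) (α z) = s (α x) (s y z) - s (α y) (s x z)) ∧
  (∀ x y z : A, s (α x) (p y z) = p (s x y) (α z) + p (α y) (p x z + s x z)) ∧
  (∀ x y z : A, p (α x) (p y z + s y z) = p (p x y) (α z) + s (α y) (p x z))

/-- twisting a Hom-Leibniz dendriform algebra `(A, ≺, ≻, α)` by a
morphism `α'` (an endomorphism preserving `≺` and `≻` and commuting with `α`)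
via `x ≺_{α'} y = α'(x≺y)`, `x ≻_{α'} y = α'(x≻y)` yields a Hom-Leibniz
dendriform algebra `(A, ≺_{α'}, ≻_{α'}, α∘α')`. -/
theorem homLeibnizDendriform_twist
    {K A : Type*} [Field K] [AddCommGroup A] [Module K A]
    (p s : A →ₗ[K] A →ₗ[K] A) (α : A →ₗ[K] A)
    (hA : HomLeibnizDendriform p s α)
    (α' : A →ₗ[K] A)
    (hα'p : ∀ x y : A, α' (p x y) = p (α' x) (α' y))
    (hα's : ∀ x y : A, α' (s x y) = s (α' x) (α' y))
    (hcomm : ∀ x : A, α' (α x) = α (α' x)) :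
    HomLeibnizDendriform (p.compr₂ α') (s.compr₂ α') (α ∘ₗ α') := by
  obtain ⟨h1, h2, h3⟩ := hA
  refine ⟨fun x y z => ?_, fun x y z => ?_, fun x y z => ?_⟩
  · have h := congrArg α' (congrArg α' (h1 x y z))
    simp only [map_add, map_sub, hα'p, hα's, hcomm, LinearMap.add_apply, LinearMap.sub_apply, LinearMap.compr₂_apply,
      LinearMap.comp_apply] at h ⊢
    exact h
  · have h := congrArg α' (congrArg α' (h2 x y z))
    simp only [map_add, map_sub, hα'p, hα's, hcomm, LinearMap.add_apply, LinearMap.sub_apply, LinearMap.compr₂_apply,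
      LinearMap.comp_apply] at h ⊢
    exact h
  · have h := congrArg α' (congrArg α' (h3 x y z))
    simp only [map_add, map_sub, hα'p, hα's, hcomm, LinearMap.add_apply, LinearMap.sub_apply, LinearMap.compr₂_apply,
      LinearMap.comp_apply] at h ⊢
    exact h
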